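/- The taïga congruence ≡_t, i.e. the join of the sylvester congruence and the stalactic congruence, is a pack-good congruence: it is a pack-congruence (for all words u,v, u ≡_t v ⟺ pack(u) ≡_t pack(v) and ev(u) = ev(v)) and it is compatible with restriction to alphabet intervals. -/

import Mathlib

open scoped Classical

/-- Words over the positive integers. -/
abbrev Word : Type := List ℕ+

/-- Evaluation of a word: number of occurrences of each letter. -/
def ev (w : Word) : ℕ+ → ℕ := fun a => w.count a

/-- A monoid congruence on the free monoid `(ℕ⁺)*`. -/
def IsCongruence (r : Word → Word → Prop) : Prop :=
  Equivalence r ∧ ∀ u v u' v', r u v → r u' v' → r (u ++ u') (v ++ v')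

/-- Restriction of a word to the letters belonging to a set `I`. -/
noncomputable def restrictTo (I : Set ℕ+) (w : Word) : Word :=
  w.filter fun a => decide (a ∈ I)

/-- `I` is an interval (order-convex subset) of `ℕ⁺`. -/
def IsIntervalSet (I : Set ℕ+) : Prop :=
  ∀ ⦃a b c : ℕ+⦄, a ∈ I → c ∈ I → a ≤ b → b ≤ c → b ∈ I

/-- Compatibility with restriction to alphabet intervals. -/
def CompatRestrict (r : Word → Word → Prop) : Prop :=
  ∀ I : Set ℕ+, IsIntervalSet I → ∀ u v, r u v → r (restrictTo I u) (restrictTo I v)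

/-- `r` is a `φ`-congruence. -/
def IsPhiCongruence (φ : Word → Word) (r : Word → Word → Prop) : Prop :=
  ∀ u v, r u v ↔ (r (φ u) (φ v) ∧ ev u = ev v)

/-- Standardization. -/
def std (w : Word) : Word :=
  (List.range w.length).map fun i =>
    ⟨((List.range w.length).countP fun j =>
        decide (w.getD j 1 < w.getD i 1 ∨ (w.getD j 1 = w.getD i 1 ∧ j < i))) + 1,
      Nat.succ_pos _⟩

/-- Packing. -/
def pack (w : Word) : Word :=
  w.map fun a => ⟨(w.dedup.countP fun b => decide (b < a)) + 1, Nat.succ_pos _⟩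

theorem parkBad_ex (w : Word) :
    ∃ d : ℕ, 1 ≤ d ∧ (w.countP fun a : ℕ+ => decide ((a : ℕ) ≤ d)) < d :=
  ⟨w.length + 1, Nat.succ_le_succ (Nat.zero_le _), by
    have h : (w.countP fun a : ℕ+ => decide ((a : ℕ) ≤ w.length + 1)) ≤ w.length :=
      List.countP_le_length
    omega⟩

/-- The smallest `d ≥ 1` such that fewer than `d` letters of `w` are `≤ d`. -/
noncomputable def parkBad (w : Word) : ℕ := Nat.find (parkBad_ex w)

/-- One pass of the parkization procedure, with fuel. -/
noncomputable def parkAux : ℕ → Word → Word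
  | 0, w => w
  | f + 1, w =>
    if parkBad w ≤ w.length then
      parkAux f (w.map fun a : ℕ+ => if parkBad w < (a : ℕ) then (a - 1 : ℕ+) else a)
    else w

/-- Parkization. The fuel `(sum of the letters)` always suffices,
since every pass strictly decreases the sum of the letters. -/
noncomputable def park (w : Word) : Word := parkAux (w.map fun a => (a : ℕ)).sum w

/-- Smallest monoid congruence containing `base`. -/
def CongClosure (base : Word → Word → Prop) (u v : Word) : Prop :=
  ∀ r : Word → Word → Prop, IsCongruence r → (∀ x y, base x y → r x y) → r u v

def sylvBase (x y : Word) : Prop :=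
  ∃ (a b c : ℕ+) (v : Word), a ≤ b ∧ b < c ∧
    x = a :: c :: (v ++ [b]) ∧ y = c :: a :: (v ++ [b])

/-- The sylvester congruence. -/
def sylv : Word → Word → Prop := CongClosure sylvBase

def stalBase (x y : Word) : Prop :=
  ∃ (a b : ℕ+) (v : Word), x = b :: a :: (v ++ [b]) ∧ y = a :: b :: (v ++ [b])

/-- The stalactic congruence. -/
def stal : Word → Word → Prop := CongClosure stalBase

def sylvSharpBase (x y : Word) : Prop :=
  ∃ (a b c : ℕ+) (v : Word), a < b ∧ b ≤ c ∧
    x = b :: (v ++ [a, c]) ∧ y = b :: (v ++ [c, a])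

/-- The #-sylvester congruence. -/
def sylvSharp : Word → Word → Prop := CongClosure sylvSharpBase

/-- The taïga congruence: join of the sylvester and stalactic congruences. -/
def taiga : Word → Word → Prop := CongClosure fun u v => sylv u v ∨ stal u v

/-- Planar binary trees with letter labels. -/
inductive BT : Type where
  | leaf : BT
  | node : BT → ℕ+ → BT → BT
deriving DecidableEq

/-- Binary search tree insertion of a letter. -/
def BT.insert : BT → ℕ+ → BT
  | .leaf, l => .node .leaf l .leaf
  | .node L b R, l => if l ≤ b then .node (L.insert l) b R else .node L b (R.insert l)

/-- Binary search tree of a word: insert the letters from right to left. -/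
def bst (w : Word) : BT := w.foldr (fun l t => t.insert l) .leaf

/-- Planar binary trees labelled by a letter and a multiplicity. -/
inductive BSTM : Type where
  | leaf : BSTM
  | node : BSTM → ℕ+ → ℕ+ → BSTM → BSTM   -- left, letter, multiplicity, right
deriving DecidableEq

/-- Insertion of a letter into a binary search tree with multiplicities. -/
def BSTM.insert : BSTM → ℕ+ → BSTM
  | .leaf, l => .node .leaf l 1 .leaf
  | .node L l' k R, l =>
    if l = l' then .node L l' (k + 1) R
    else if l < l' then .node (L.insert l) l' k R
    else .node L l' k (R.insert l)

/-- The `P`-symbol: insert the letters of `w` from right to left. -/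
def Pmap (w : Word) : BSTM := w.foldr (fun l t => t.insert l) .leaf

/-- Letters of a BSTM in left-to-right (infix) order. -/
def BSTM.letters : BSTM → List ℕ+
  | .leaf => []
  | .node L l _ R => L.letters ++ l :: R.letters

/-- The binary search tree property for a BSTM. -/
def BSTM.IsSearchTree : BSTM → Prop
  | .leaf => True
  | .node L l _ R =>
      (∀ x ∈ L.letters, x < l) ∧ (∀ x ∈ R.letters, l < x) ∧
        L.IsSearchTree ∧ R.IsSearchTree

/-- Total multiplicity of a letter in a BSTM. -/
def BSTM.mult : BSTM → ℕ+ → ℕ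
  | .leaf, _ => 0
  | .node L l k R, a => L.mult a + (if a = l then (k : ℕ) else 0) + R.mult a

/-- Size of a BSTM: sum of the multiplicities. -/
def BSTM.size : BSTM → ℕ
  | .leaf => 0
  | .node L _ k R => L.size + (k : ℕ) + R.size

/-- Planar binary trees with multiplicities. -/
inductive BTM : Type where
  | leaf : BTM
  | node : BTM → ℕ+ → BTM → BTM
deriving DecidableEq

/-- Size of a BTM: sum of the multiplicities. -/
def BTM.size : BTM → ℕ
  | .leaf => 0
  | .node L k R => L.size + (k : ℕ) + R.size

/-- Number of nodes of a BTM. -/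
def BTM.numNodes : BTM → ℕ
  | .leaf => 0
  | .node L _ R => L.numNodes + 1 + R.numNodes

/-- Forgetting the letters of a BSTM gives a BTM. -/
def forgetLetters : BSTM → BTM
  | .leaf => .leaf
  | .node L _ k R => .node (forgetLetters L) k (forgetLetters R)

/-- The `B`-symbol: the BTM underlying `P(w)`. -/
def Bmap (w : Word) : BTM := forgetLetters (Pmap w)

/-- A packed word: its set of letters is `{1, …, k}` for some `k`. -/
def IsPacked (w : Word) : Prop := ∀ a ∈ w, ∀ b : ℕ+, b ≤ a → b ∈ w

/-- Number of packed words inserting to the BTM `T`. -/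
noncomputable def fT (T : BTM) : ℕ :=
  Set.ncard {w : Word | IsPacked w ∧ Bmap w = T}

/-- The hook-type product over the subtrees of a BTM. -/
def hookProd : BTM → ℕ
  | .leaf => 1
  | .node L k R =>
      (BTM.node L k R).size * ((k : ℕ) - 1).factorial * hookProd L * hookProd R

/-- Label the nodes of a BTM in infix order starting from a given letter;
returns the labelled tree and the next unused letter. -/
def infixLabelAux : BTM → ℕ+ → BSTM × ℕ+
  | .leaf, n => (.leaf, n)
  | .node L k R, n =>
    let p := infixLabelAux L n
    let q := infixLabelAux R (p.2 + 1)
    (.node p.1 p.2 k q.1, q.2)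

/-- Label the nodes of a BTM by `1, …, k` in infix order. -/
def infixLabel (T : BTM) : BSTM := (infixLabelAux T 1).1

/-! The sylvester and stalactic relations both exchange two adjacent letters and only compare
letters with each other. Hence the taïga congruence is generated by their union, taïga-equivalent
words are permutations of each other, and a letter map that is strictly increasing on the letters
of a word carries its taïga class into a taïga class. Packing is such a map, and on the letters of
a word it has a strictly increasing inverse. Deleting the letters outside an interval from an
instance of either relation leaves an instance of the same relation or two equal words: for
`ac·v·b ≡ ca·v·b`, if `a` and `c` lie in the interval then so does `a ≤ b < c`. -/

namespace CongClosure

variable {base : Word → Word → Prop}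

theorem isCongruence (base : Word → Word → Prop) : IsCongruence (CongClosure base) :=
  ⟨⟨fun _ _ hr _ => hr.1.refl _, fun h r hr hb => hr.1.symm (h r hr hb),
      fun h₁ h₂ r hr hb => hr.1.trans (h₁ r hr hb) (h₂ r hr hb)⟩,
    fun _ _ _ _ h h' r hr hb => hr.2 _ _ _ _ (h r hr hb) (h' r hr hb)⟩

theorem of_base {x y : Word} (h : base x y) : CongClosure base x y :=
  fun _ _ hb => hb x y h

theorem minimal {r : Word → Word → Prop} (hr : IsCongruence r) (hb : ∀ x y, base x y → r x y)
    {x y : Word} (h : CongClosure base x y) : r x y :=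
  h r hr hb

theorem map_of_append {r : Word → Word → Prop} (hr : IsCongruence r) {f : Word → Word}
    (hf : ∀ x y, f (x ++ y) = f x ++ f y) (hb : ∀ x y, base x y → r (f x) (f y))
    {u v : Word} (h : CongClosure base u v) : r (f u) (f v) := by
  refine minimal (r := fun x y => r (f x) (f y)) ⟨hr.1.comap f, fun x y x' y' h h' => ?_⟩ hb h
  simpa only [hf] using hr.2 _ _ _ _ h h'

/-- Carrying the permutation along lets the condition on the letters pass through symmetry and
transitivity. -/
theorem map_of_forall_mem {r : Word → Word → Prop} (hr : IsCongruence r) {S : Set ℕ+}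
    {g : ℕ+ → ℕ+} (hperm : ∀ x y, base x y → x.Perm y)
    (hb : ∀ x y, base x y → (∀ a ∈ x, a ∈ S) → r (x.map g) (y.map g))
    {u v : Word} (h : CongClosure base u v) (hu : ∀ a ∈ u, a ∈ S) : r (u.map g) (v.map g) := by
  let R : Word → Word → Prop := fun x y =>
    x.Perm y ∧ ((∀ a ∈ x, a ∈ S) → r (x.map g) (y.map g))
  have hR : IsCongruence R := by
    refine ⟨⟨fun x => ⟨.refl x, fun _ => hr.1.refl _⟩, ?_, ?_⟩, ?_⟩
    · rintro x y ⟨hxy, hmap⟩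
      exact ⟨hxy.symm, fun hy => hr.1.symm (hmap fun a ha => hy a (hxy.mem_iff.1 ha))⟩
    · rintro x y z ⟨hxy, hmap⟩ ⟨hyz, hmap'⟩
      exact ⟨hxy.trans hyz, fun hx => hr.1.trans (hmap hx)
        (hmap' fun a ha => hx a (hxy.mem_iff.2 ha))⟩
    · rintro x y x' y' ⟨hxy, hmap⟩ ⟨hxy', hmap'⟩
      refine ⟨hxy.append hxy', fun hx => ?_⟩
      simp only [List.map_append]
      exact hr.2 _ _ _ _ (hmap fun a ha => hx a (List.mem_append_left _ ha))
        (hmap' fun a ha => hx a (List.mem_append_right _ ha))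
  exact (minimal hR (fun x y h => ⟨hperm x y h, hb x y h⟩) h).2 hu

end CongClosure

theorem congClosure_or_congClosure (base₁ base₂ : Word → Word → Prop) :
    CongClosure (fun x y => CongClosure base₁ x y ∨ CongClosure base₂ x y) =
      CongClosure (fun x y => base₁ x y ∨ base₂ x y) := by
  have hcong := CongClosure.isCongruence fun x y => base₁ x y ∨ base₂ x y
  ext x y
  constructor
  · refine CongClosure.minimal hcong fun x y h => ?_
    rcases h with h | h
    · exact CongClosure.minimal hcong (fun x y h => CongClosure.of_base (Or.inl h)) h
    · exact CongClosure.minimal hcong (fun x y h => CongClosure.of_base (Or.inr h)) h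
  · refine CongClosure.minimal (CongClosure.isCongruence _) fun x y h => ?_
    rcases h with h | h
    · exact CongClosure.of_base (Or.inl (CongClosure.of_base h))
    · exact CongClosure.of_base (Or.inr (CongClosure.of_base h))

theorem isCongruence_perm : IsCongruence (List.Perm : Word → Word → Prop) :=
  ⟨List.Perm.eqv _, fun _ _ _ _ h h' => h.append h'⟩

theorem restrictTo_append (I : Set ℕ+) (x y : Word) :
    restrictTo I (x ++ y) = restrictTo I x ++ restrictTo I y :=
  List.filter_append _ _

namespace sylvBase

variable {x y : Word}

theorem perm (h : sylvBase x y) : x.Perm y := by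
  obtain ⟨a, b, c, v, -, -, rfl, rfl⟩ := h
  exact .swap c a _

theorem map_of_strictMonoOn {S : Set ℕ+} {g : ℕ+ → ℕ+} (hg : StrictMonoOn g S)
    (h : sylvBase x y) (hx : ∀ a ∈ x, a ∈ S) : sylvBase (x.map g) (y.map g) := by
  obtain ⟨a, b, c, v, hab, hbc, rfl, rfl⟩ := h
  have haS : a ∈ S := hx a (by simp)
  have hbS : b ∈ S := hx b (by simp)
  have hcS : c ∈ S := hx c (by simp)
  exact ⟨g a, g b, g c, v.map g, hg.monotoneOn haS hbS hab, hg hbS hcS hbc, by simp, by simp⟩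

theorem restrictTo {I : Set ℕ+} (hI : IsIntervalSet I) (h : sylvBase x y) :
    restrictTo I x = restrictTo I y ∨ sylvBase (restrictTo I x) (restrictTo I y) := by
  obtain ⟨a, b, c, v, hab, hbc, rfl, rfl⟩ := h
  by_cases haI : a ∈ I <;> by_cases hcI : c ∈ I
  · have hbI : b ∈ I := hI haI hcI hab hbc.le
    exact .inr ⟨a, b, c, _root_.restrictTo I v, hab, hbc,
      by simp [_root_.restrictTo, haI, hbI, hcI], by simp [_root_.restrictTo, haI, hbI, hcI]⟩
  all_goals exact .inl (by simp [_root_.restrictTo, haI, hcI])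

end sylvBase

namespace stalBase

variable {x y : Word}

theorem perm (h : stalBase x y) : x.Perm y := by
  obtain ⟨a, b, v, rfl, rfl⟩ := h
  exact .swap a b _

theorem map (g : ℕ+ → ℕ+) (h : stalBase x y) : stalBase (x.map g) (y.map g) := by
  obtain ⟨a, b, v, rfl, rfl⟩ := h
  exact ⟨g a, g b, v.map g, by simp, by simp⟩

theorem restrictTo (I : Set ℕ+) (h : stalBase x y) :
    restrictTo I x = restrictTo I y ∨ stalBase (restrictTo I x) (restrictTo I y) := by
  obtain ⟨a, b, v, rfl, rfl⟩ := h
  by_cases haI : a ∈ I <;> by_cases hbI : b ∈ I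
  · exact .inr ⟨a, b, _root_.restrictTo I v,
      by simp [_root_.restrictTo, haI, hbI], by simp [_root_.restrictTo, haI, hbI]⟩
  all_goals exact .inl (by simp [_root_.restrictTo, haI, hbI])

end stalBase

def taigaBase (x y : Word) : Prop := sylvBase x y ∨ stalBase x y

theorem taiga_eq_congClosure : taiga = CongClosure taigaBase :=
  congClosure_or_congClosure sylvBase stalBase

theorem taigaBase.perm {x y : Word} (h : taigaBase x y) : x.Perm y :=
  h.elim sylvBase.perm stalBase.perm

theorem isCongruence_taiga : IsCongruence taiga :=
  CongClosure.isCongruence _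

namespace taiga

variable {u v : Word}

theorem perm (h : taiga u v) : u.Perm v := by
  rw [taiga_eq_congClosure] at h
  exact CongClosure.minimal isCongruence_perm (fun _ _ => taigaBase.perm) h

theorem map_of_strictMonoOn {S : Set ℕ+} {g : ℕ+ → ℕ+} (hg : StrictMonoOn g S)
    (hu : ∀ a ∈ u, a ∈ S) (h : taiga u v) : taiga (u.map g) (v.map g) := by
  rw [taiga_eq_congClosure] at h ⊢
  refine CongClosure.map_of_forall_mem (CongClosure.isCongruence _) (fun _ _ => taigaBase.perm)
    (fun x y hxy hx => CongClosure.of_base ?_) h hu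
  rcases hxy with hxy | hxy
  · exact .inl (hxy.map_of_strictMonoOn hg hx)
  · exact .inr (hxy.map g)

theorem restrictTo {I : Set ℕ+} (hI : IsIntervalSet I) (h : taiga u v) :
    taiga (restrictTo I u) (restrictTo I v) := by
  rw [taiga_eq_congClosure] at h ⊢
  refine CongClosure.map_of_append (CongClosure.isCongruence _) (restrictTo_append I)
    (fun x y hxy => ?_) h
  have hcong := CongClosure.isCongruence taigaBase
  rcases hxy with hxy | hxy
  · rcases hxy.restrictTo hI with heq | hxy'
    · exact heq ▸ hcong.1.refl _
    · exact CongClosure.of_base (.inl hxy')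
  · rcases hxy.restrictTo I with heq | hxy'
    · exact heq ▸ hcong.1.refl _
    · exact CongClosure.of_base (.inr hxy')

end taiga

theorem compatRestrict_taiga : CompatRestrict taiga :=
  fun _ hI _ _ => taiga.restrictTo hI

/-- The inverse direction applies the forward one to `Function.invFunOn g S`, which is strictly
increasing on `g '' S`. -/
theorem taiga_map_iff_of_strictMonoOn {S : Set ℕ+} {g : ℕ+ → ℕ+} (hg : StrictMonoOn g S)
    {u v : Word} (hu : ∀ a ∈ u, a ∈ S) (huv : u.Perm v) :
    taiga (u.map g) (v.map g) ↔ taiga u v := by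
  refine ⟨fun h => ?_, taiga.map_of_strictMonoOn hg hu⟩
  have hleft : Set.LeftInvOn (Function.invFunOn g S) g S := hg.injOn.leftInvOn_invFunOn
  have hg' : StrictMonoOn (Function.invFunOn g S) (g '' S) := by
    rintro _ ⟨a, ha, rfl⟩ _ ⟨b, hb, rfl⟩ hab
    rw [hleft ha, hleft hb]
    exact (hg.lt_iff_lt ha hb).1 hab
  have hinv : ∀ w : Word, (∀ a ∈ w, a ∈ S) → (w.map g).map (Function.invFunOn g S) = w :=
    fun w hw => by
      rw [List.map_map]
      exact (List.map_congr_left fun a ha => hleft (hw a ha)).trans (List.map_id w)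
  have hv : ∀ a ∈ v, a ∈ S := fun a ha => hu a (huv.mem_iff.2 ha)
  have hgu : ∀ a ∈ u.map g, a ∈ g '' S := by
    simp only [List.mem_map]
    rintro _ ⟨a, ha, rfl⟩
    exact ⟨a, hu a ha, rfl⟩
  simpa only [hinv u hu, hinv v hv] using taiga.map_of_strictMonoOn hg' hgu h

def packRank (u : Word) (a : ℕ+) : ℕ+ :=
  ⟨(u.dedup.countP fun b => decide (b < a)) + 1, Nat.succ_pos _⟩

theorem pack_eq_map_packRank (u : Word) : pack u = u.map (packRank u) := rfl

theorem packRank_eq_of_perm {u v : Word} (h : u.Perm v) : packRank u = packRank v := by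
  funext a
  exact PNat.eq (congrArg (· + 1) (h.dedup.countP_eq _))

theorem packRank_strictMonoOn (u : Word) : StrictMonoOn (packRank u) {a | a ∈ u} := by
  intro a ha b _ hab
  have hcard (c : ℕ+) :
      u.dedup.countP (fun b => decide (b < c)) = (u.toFinset.filter (· < c)).card := by
    rw [← Multiset.coe_countP, Multiset.countP_eq_card_filter]
    rfl
  have hlt : (u.toFinset.filter (· < a)).card < (u.toFinset.filter (· < b)).card :=
    Finset.card_lt_card ((Finset.ssubset_iff_of_subset
      (Finset.monotone_filter_right _ fun _ _ hc => lt_trans hc hab)).2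
        ⟨a, Finset.mem_filter.2 ⟨List.mem_toFinset.2 ha, hab⟩, by simp⟩)
  rw [← PNat.coe_lt_coe]
  simpa only [packRank, PNat.mk_coe, hcard, add_lt_add_iff_right] using hlt

theorem ev_eq_iff_perm {u v : Word} : ev u = ev v ↔ u.Perm v := by
  rw [List.perm_iff_count, funext_iff]
  rfl

theorem isPhiCongruence_pack_taiga : IsPhiCongruence pack taiga := by
  intro u v
  rw [ev_eq_iff_perm]
  constructor
  · intro h
    rw [pack_eq_map_packRank, pack_eq_map_packRank v, ← packRank_eq_of_perm h.perm]
    exact ⟨h.map_of_strictMonoOn (packRank_strictMonoOn u) (fun _ => id), h.perm⟩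
  · rintro ⟨h, huv⟩
    rw [pack_eq_map_packRank, pack_eq_map_packRank v, ← packRank_eq_of_perm huv] at h
    exact (taiga_map_iff_of_strictMonoOn (packRank_strictMonoOn u) (fun _ => id) huv).1 h

theorem taiga_is_packGood :
    IsCongruence taiga ∧ IsPhiCongruence pack taiga ∧ CompatRestrict taiga :=
  ⟨isCongruence_taiga, isPhiCongruence_pack_taiga, compatRestrict_taiga⟩
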